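/- Let T be a contraction on a complex Hilbert space H, let V be a unitary operator on a complex Hilbert space H', and let E be a complex Hilbert space. The unitary dilations of T ⊕ V on (H ⊕ H') ⊕ E are exactly the operators of the form U ⊕ V under the natural identification (H ⊕ H') ⊕ E ≅ (H ⊕ E) ⊕ H', where U is a unitary operator on H ⊕ E whose compression to H is T. In particular, if W is a unitary operator on (H ⊕ H') ⊕ E whose compression to H ⊕ H' equals T ⊕ V, then W(0 ⊕ h' ⊕ 0) = 0 ⊕ V h' ⊕ 0 for all h' ∈ H', the subspace {x ⊕ 0 ⊕ e : x ∈ H, e ∈ E} is invariant under W and W*, and the restriction of W to this subspace is a unitary operator on H ⊕ E whose compression to H is T. -/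

import Mathlib

open scoped InnerProductSpace
open Filter Topology

/-- `U` is a unitary dilation of `T` on the orthogonal direct sum `H ⊕ E`
(realized as `WithLp 2 (H × E)`): `U` is unitary and the compression of `U` to `H` is `T`. -/
def IsUnitaryDilation {H E : Type*} [NormedAddCommGroup H] [InnerProductSpace ℂ H]
    [CompleteSpace H] [NormedAddCommGroup E] [InnerProductSpace ℂ E] [CompleteSpace E]
    (T : H →L[ℂ] H) (U : WithLp 2 (H × E) →L[ℂ] WithLp 2 (H × E)) : Prop :=
  U ∈ unitary (WithLp 2 (H × E) →L[ℂ] WithLp 2 (H × E)) ∧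
    ∀ x : H, T x = (WithLp.equiv 2 (H × E) (U ((WithLp.equiv 2 (H × E)).symm (x, 0)))).1

/-- The direct sum `T ⊕ V` of two operators, acting on the Hilbert space direct sum
`WithLp 2 (H × H')`. -/
noncomputable def prodOp {H H' : Type*} [NormedAddCommGroup H] [InnerProductSpace ℂ H]
    [NormedAddCommGroup H'] [InnerProductSpace ℂ H']
    (T : H →L[ℂ] H) (V : H' →L[ℂ] H') : WithLp 2 (H × H') →L[ℂ] WithLp 2 (H × H') :=
  ((WithLp.prodContinuousLinearEquiv 2 ℂ H H').symm.toContinuousLinearMap).comp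
    ((T.prodMap V).comp (WithLp.prodContinuousLinearEquiv 2 ℂ H H').toContinuousLinearMap)

/-- The element `x ⊕ h' ⊕ e` of `(H ⊕ H') ⊕ E`, realized as
`WithLp 2 (WithLp 2 (H × H') × E)`. -/
noncomputable def mk3 {H H' E : Type*} [NormedAddCommGroup H] [InnerProductSpace ℂ H]
    [NormedAddCommGroup H'] [InnerProductSpace ℂ H']
    [NormedAddCommGroup E] [InnerProductSpace ℂ E]
    (x : H) (h' : H') (e : E) : WithLp 2 (WithLp 2 (H × H') × E) :=
  (WithLp.equiv 2 (WithLp 2 (H × H') × E)).symm ((WithLp.equiv 2 (H × H')).symm (x, h'), e)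

/-!
Since `V` is unitary, the compression `T ⊕ V` of a unitary dilation `W` is already isometric on
`H'`, so `W` maps `H'` into itself, and onto itself because `V` is surjective. Then `W*` also
maps `H'` onto itself, so `H'` reduces `W`: after the reshuffle `(H ⊕ H') ⊕ E ≅ (H ⊕ E) ⊕ H'`,
`W = U ⊕ V` with `U` a unitary on `H ⊕ E`, whose compression to `H` is that of `W`, namely `T`.
-/

open WithLp ContinuousLinearMap

@[ext]
lemma WithLp.prod_ext {p : ENNReal} {α β : Type*} {z w : WithLp p (α × β)}
    (h₁ : z.fst = w.fst) (h₂ : z.snd = w.snd) : z = w :=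
  (WithLp.equiv p _).injective (Prod.ext h₁ h₂)

lemma WithLp.snd_eq_zero_of_norm_fst_eq {α β : Type*} [SeminormedAddCommGroup α]
    [NormedAddCommGroup β] {z : WithLp 2 (α × β)} (h : ‖z.fst‖ = ‖z‖) : z.snd = 0 := by
  have hz := prod_norm_sq_eq_of_L2 z
  rw [h] at hz
  simpa using hz

namespace LinearIsometryEquiv

variable (p : ENNReal) [Fact (1 ≤ p)] (𝕜 : Type*) [Semiring 𝕜]
  (α β γ : Type*) [SeminormedAddCommGroup α] [Module 𝕜 α]
  [SeminormedAddCommGroup β] [Module 𝕜 β] [SeminormedAddCommGroup γ] [Module 𝕜 γ]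

noncomputable def withLpProdRightComm :
    WithLp p (WithLp p (α × β) × γ) ≃ₗᵢ[𝕜] WithLp p (WithLp p (α × γ) × β) :=
  (withLpProdAssoc p 𝕜 α β γ).trans <|
    (withLpProdCongr p (.refl 𝕜 α) (withLpProdComm p 𝕜 β γ)).trans
      (withLpProdAssoc p 𝕜 α γ β).symm

@[simp]
lemma withLpProdRightComm_apply (a : α) (b : β) (c : γ) :
    withLpProdRightComm p 𝕜 α β γ (toLp p (toLp p (a, b), c)) = toLp p (toLp p (a, c), b) :=
  rfl

@[simp]
lemma withLpProdRightComm_symm_apply (a : α) (b : β) (c : γ) :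
    (withLpProdRightComm p 𝕜 α β γ).symm (toLp p (toLp p (a, c), b)) =
      toLp p (toLp p (a, b), c) :=
  rfl

end LinearIsometryEquiv

section Unitary

variable {𝕜 F : Type*} [RCLike 𝕜] [NormedAddCommGroup F] [InnerProductSpace 𝕜 F] [CompleteSpace F]

lemma LinearIsometryEquiv.conjStarAlgEquiv_mem_unitary {G : Type*} [NormedAddCommGroup G]
    [InnerProductSpace 𝕜 G] [CompleteSpace G] (e : F ≃ₗᵢ[𝕜] G) {A : F →L[𝕜] F}
    (hA : A ∈ unitary (F →L[𝕜] F)) : e.conjStarAlgEquiv A ∈ unitary (G →L[𝕜] G) :=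
  Unitary.map_mem _ hA

lemma ContinuousLinearMap.star_apply_apply_of_mem_unitary {A : F →L[𝕜] F}
    (hA : A ∈ unitary (F →L[𝕜] F)) (x : F) : star A (A x) = x :=
  congr($(Unitary.star_mul_self_of_mem hA) x)

lemma ContinuousLinearMap.apply_star_apply_of_mem_unitary {A : F →L[𝕜] F}
    (hA : A ∈ unitary (F →L[𝕜] F)) (x : F) : A (star A x) = x :=
  congr($(Unitary.mul_star_self_of_mem hA) x)

lemma apply_toLp_eq_of_norm_fst_eq {G : Type*} [NormedAddCommGroup G] [InnerProductSpace 𝕜 G]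
    [CompleteSpace G] {W : WithLp 2 (F × G) →L[𝕜] WithLp 2 (F × G)} (hW : W ∈ unitary _)
    {x : F} (hx : ‖(W (toLp 2 (x, 0))).fst‖ = ‖x‖) :
    W (toLp 2 (x, 0)) = toLp 2 ((W (toLp 2 (x, 0))).fst, 0) := by
  have hsnd : (W (toLp 2 (x, 0))).snd = 0 := snd_eq_zero_of_norm_fst_eq <| by
    rw [hx, norm_map_of_mem_unitary hW, norm_toLp_fst]
  ext
  · rfl
  · exact hsnd

end Unitary

section ProdOp

variable {X Y : Type*} [NormedAddCommGroup X] [InnerProductSpace ℂ X]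
  [NormedAddCommGroup Y] [InnerProductSpace ℂ Y]

@[simp]
lemma prodOp_apply (A : X →L[ℂ] X) (B : Y →L[ℂ] Y) (z : WithLp 2 (X × Y)) :
    prodOp A B z = toLp 2 (A z.fst, B z.snd) :=
  rfl

lemma prodOp_mul (A A' : X →L[ℂ] X) (B B' : Y →L[ℂ] Y) :
    prodOp (A * A') (B * B') = prodOp A B * prodOp A' B' :=
  rfl

lemma prodOp_eq_one_iff (A : X →L[ℂ] X) (B : Y →L[ℂ] Y) :
    prodOp A B = 1 ↔ A = 1 ∧ B = 1 := by
  refine ⟨fun h ↦ ⟨ContinuousLinearMap.ext fun x ↦ ?_, ContinuousLinearMap.ext fun y ↦ ?_⟩,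
    fun ⟨hA, hB⟩ ↦ hA ▸ hB ▸ rfl⟩
  · simpa using congr(($h (toLp 2 (x, 0))).fst)
  · simpa using congr(($h (toLp 2 (0, y))).snd)

variable [CompleteSpace X] [CompleteSpace Y]

lemma star_prodOp (A : X →L[ℂ] X) (B : Y →L[ℂ] Y) :
    star (prodOp A B) = prodOp (star A) (star B) := by
  refine ((eq_adjoint_iff _ _).mpr fun z w ↦ ?_).symm
  simp [star_eq_adjoint, adjoint_inner_left]

lemma prodOp_mem_unitary_iff {A : X →L[ℂ] X} {B : Y →L[ℂ] Y} :
    prodOp A B ∈ unitary (WithLp 2 (X × Y) →L[ℂ] WithLp 2 (X × Y)) ↔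
      A ∈ unitary (X →L[ℂ] X) ∧ B ∈ unitary (Y →L[ℂ] Y) := by
  simp only [Unitary.mem_iff, star_prodOp, ← prodOp_mul, prodOp_eq_one_iff]
  tauto

lemma exists_eq_prodOp_of_apply_toLp_zero {W : WithLp 2 (X × Y) →L[ℂ] WithLp 2 (X × Y)}
    (hW : W ∈ unitary _) {V : Y →L[ℂ] Y} (hV : V ∈ unitary _)
    (hWV : ∀ y, W (toLp 2 (0, y)) = toLp 2 (0, V y)) :
    ∃ U : X →L[ℂ] X, W = prodOp U V := by
  have hstar (y : Y) : star W (toLp 2 (0, y)) = toLp 2 (0, star V y) := by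
    rw [← star_apply_apply_of_mem_unitary hW (toLp 2 (0, star V y)), hWV,
      apply_star_apply_of_mem_unitary hV]
  -- `W* Y ⊆ Y` forces `W (Y⟂) ⊆ Y⟂`
  have hsnd (x : X) : (W (toLp 2 (x, 0))).snd = 0 := by
    set s := (W (toLp 2 (x, 0))).snd
    have h : ⟪W (toLp 2 (x, 0)), toLp 2 (0, s)⟫_ℂ =
        ⟪toLp 2 (x, 0), star W (toLp 2 (0, s))⟫_ℂ := by
      rw [star_eq_adjoint, adjoint_inner_right]
    rw [hstar] at h
    simpa [s] using h
  refine ⟨fstL 2 ℂ X Y ∘L W ∘L (prodContinuousLinearEquiv 2 ℂ X Y).symm.toContinuousLinearMap ∘L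
    inl ℂ X Y, ContinuousLinearMap.ext fun z ↦ ?_⟩
  have hz : W z = W (toLp 2 (z.fst, 0)) + W (toLp 2 (0, z.snd)) := by
    rw [← map_add, ← toLp_add, Prod.mk_add_mk, add_zero, zero_add]
    rfl
  ext <;> simp [hz, hWV, hsnd]

end ProdOp

section Dilation

variable {H : Type*} [NormedAddCommGroup H] [InnerProductSpace ℂ H]
  {H' : Type*} [NormedAddCommGroup H'] [InnerProductSpace ℂ H']
  {E : Type*} [NormedAddCommGroup E] [InnerProductSpace ℂ E]

lemma mk3_eq (x : H) (h' : H') (e : E) : mk3 x h' e = toLp 2 (toLp 2 (x, h'), e) :=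
  rfl

variable [CompleteSpace H] [CompleteSpace H'] [CompleteSpace E]

lemma isUnitaryDilation_iff (T : H →L[ℂ] H) (U : WithLp 2 (H × E) →L[ℂ] WithLp 2 (H × E)) :
    IsUnitaryDilation T U ↔ U ∈ unitary _ ∧ ∀ x, T x = (U (toLp 2 (x, 0))).fst :=
  Iff.rfl

/-- The operator `U ⊕ V`, transported along `(H ⊕ H') ⊕ E ≅ (H ⊕ E) ⊕ H'`. -/
noncomputable def prodOpRightComm (U : WithLp 2 (H × E) →L[ℂ] WithLp 2 (H × E))
    (V : H' →L[ℂ] H') : WithLp 2 (WithLp 2 (H × H') × E) →L[ℂ] WithLp 2 (WithLp 2 (H × H') × E) :=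
  (LinearIsometryEquiv.withLpProdRightComm 2 ℂ H H' E).symm.conjStarAlgEquiv (prodOp U V)

lemma prodOpRightComm_mk3 (U : WithLp 2 (H × E) →L[ℂ] WithLp 2 (H × E)) (V : H' →L[ℂ] H')
    (x : H) (h' : H') (e : E) :
    prodOpRightComm U V (mk3 x h' e) =
      mk3 (U (toLp 2 (x, e))).fst (V h') (U (toLp 2 (x, e))).snd :=
  rfl

lemma star_prodOpRightComm (U : WithLp 2 (H × E) →L[ℂ] WithLp 2 (H × E)) (V : H' →L[ℂ] H') :
    star (prodOpRightComm U V) = prodOpRightComm (star U) (star V) := by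
  rw [prodOpRightComm, prodOpRightComm, ← star_prodOp]
  exact (LinearIsometryEquiv.conjStarAlgEquiv _ |>.map_star' _).symm

lemma isUnitaryDilation_prodOpRightComm {T : H →L[ℂ] H}
    {U : WithLp 2 (H × E) →L[ℂ] WithLp 2 (H × E)} (hU : IsUnitaryDilation T U)
    {V : H' →L[ℂ] H'} (hV : V ∈ unitary _) :
    IsUnitaryDilation (prodOp T V) (prodOpRightComm U V) := by
  rw [isUnitaryDilation_iff] at hU ⊢
  refine ⟨LinearIsometryEquiv.conjStarAlgEquiv_mem_unitary _
    (prodOp_mem_unitary_iff.mpr ⟨hU.1, hV⟩), fun z ↦ ?_⟩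
  rw [show toLp 2 (z, 0) = mk3 z.fst z.snd (0 : E) from rfl, prodOpRightComm_mk3]
  ext <;> simp [hU.2, mk3_eq]

lemma exists_eq_prodOpRightComm {T : H →L[ℂ] H} {V : H' →L[ℂ] H'} (hV : V ∈ unitary _)
    {W : WithLp 2 (WithLp 2 (H × H') × E) →L[ℂ] WithLp 2 (WithLp 2 (H × H') × E)}
    (hW : IsUnitaryDilation (prodOp T V) W) :
    ∃ U, IsUnitaryDilation T U ∧ W = prodOpRightComm U V := by
  rw [isUnitaryDilation_iff] at hW
  have hfix (h' : H') : W (mk3 0 h' 0) = mk3 0 (V h') 0 := by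
    have hcomp : (W (toLp 2 (toLp 2 (0, h'), 0))).fst = toLp 2 (0, V h') := by
      rw [← hW.2]
      simp
    have h := apply_toLp_eq_of_norm_fst_eq hW.1 (x := toLp 2 (0, h')) <| by
      rw [hcomp, norm_toLp_snd, norm_toLp_snd, norm_map_of_mem_unitary hV]
    rwa [hcomp] at h
  set σ := LinearIsometryEquiv.withLpProdRightComm 2 ℂ H H' E
  have hWσ := LinearIsometryEquiv.conjStarAlgEquiv_mem_unitary σ hW.1
  obtain ⟨U, hU⟩ := exists_eq_prodOp_of_apply_toLp_zero hWσ hV fun h' ↦ by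
    change σ (W (σ.symm (toLp 2 (toLp 2 (0, 0), h')))) = toLp 2 (toLp 2 (0, 0), V h')
    rw [LinearIsometryEquiv.withLpProdRightComm_symm_apply, ← mk3_eq, hfix, mk3_eq,
      LinearIsometryEquiv.withLpProdRightComm_apply]
  have hWU : W = prodOpRightComm U V := by
    rw [prodOpRightComm, ← hU, ← LinearIsometryEquiv.symm_conjStarAlgEquiv,
      StarAlgEquiv.symm_apply_apply]
  rw [hU, prodOp_mem_unitary_iff] at hWσ
  subst hWU
  refine ⟨U, (isUnitaryDilation_iff T U).mpr ⟨hWσ.1, fun x ↦ ?_⟩, rfl⟩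
  have hx := hW.2 (toLp 2 (x, 0))
  rw [← mk3_eq, prodOpRightComm_mk3] at hx
  exact congrArg WithLp.fst hx

end Dilation

theorem unitary_dilations_of_prod_unitary_general
    {H : Type*} [NormedAddCommGroup H] [InnerProductSpace ℂ H] [CompleteSpace H]
    {H' : Type*} [NormedAddCommGroup H'] [InnerProductSpace ℂ H'] [CompleteSpace H']
    {E : Type*} [NormedAddCommGroup E] [InnerProductSpace ℂ E] [CompleteSpace E]
    (T : H →L[ℂ] H)
    (V : H' →L[ℂ] H') (hV : V ∈ unitary (H' →L[ℂ] H')) :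
    (∀ W : WithLp 2 (WithLp 2 (H × H') × E) →L[ℂ] WithLp 2 (WithLp 2 (H × H') × E),
      IsUnitaryDilation (prodOp T V) W →
        (∀ h' : H', W (mk3 0 h' 0) = mk3 0 (V h') 0) ∧
        (∀ (x : H) (e : E), ∃ (x' : H) (e' : E), W (mk3 x 0 e) = mk3 x' 0 e') ∧
        (∀ (x : H) (e : E), ∃ (x' : H) (e' : E), (star W) (mk3 x 0 e) = mk3 x' 0 e') ∧
        (∃ U : WithLp 2 (H × E) →L[ℂ] WithLp 2 (H × E),
          IsUnitaryDilation T U ∧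
          ∀ (x : H) (e : E),
            let u := WithLp.equiv 2 (H × E) (U ((WithLp.equiv 2 (H × E)).symm (x, e)))
            W (mk3 x 0 e) = mk3 u.1 0 u.2)) ∧
    (∀ U : WithLp 2 (H × E) →L[ℂ] WithLp 2 (H × E),
      IsUnitaryDilation T U →
        ∃ W : WithLp 2 (WithLp 2 (H × H') × E) →L[ℂ] WithLp 2 (WithLp 2 (H × H') × E),
          IsUnitaryDilation (prodOp T V) W ∧
          ∀ (x : H) (h' : H') (e : E),
            let u := WithLp.equiv 2 (H × E) (U ((WithLp.equiv 2 (H × E)).symm (x, e)))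
            W (mk3 x h' e) = mk3 u.1 (V h') u.2) := by
  refine ⟨fun W hW ↦ ?_, fun U hU ↦
    ⟨prodOpRightComm U V, isUnitaryDilation_prodOpRightComm hU hV, prodOpRightComm_mk3 U V⟩⟩
  obtain ⟨U, hU, rfl⟩ := exists_eq_prodOpRightComm hV hW
  have hHE (U' : WithLp 2 (H × E) →L[ℂ] WithLp 2 (H × E)) (V' : H' →L[ℂ] H') (x : H) (e : E) :
      prodOpRightComm U' V' (mk3 x 0 e) =
        mk3 (U' (toLp 2 (x, e))).fst 0 (U' (toLp 2 (x, e))).snd := by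
    rw [prodOpRightComm_mk3, map_zero]
  refine ⟨fun h' ↦ ?_, fun x e ↦ ⟨_, _, hHE U V x e⟩, fun x e ↦ ?_, U, hU, hHE U V⟩
  · rw [prodOpRightComm_mk3, show toLp 2 ((0 : H), (0 : E)) = 0 from rfl, map_zero]
    rfl
  · rw [star_prodOpRightComm]
    exact ⟨_, _, hHE (star U) (star V) x e⟩

/-- The unitary dilations of `T ⊕ V` on `(H ⊕ H') ⊕ E` (`V` unitary)
are exactly the operators `U ⊕ V` under the identification
`(H ⊕ H') ⊕ E ≅ (H ⊕ E) ⊕ H'`, where `U` is a unitary dilation of `T` on `H ⊕ E`.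
In particular every unitary dilation `W` of `T ⊕ V` fixes the summand `H'` (acting on it
as `V`), leaves the subspace `H ⊕ E` invariant together with its adjoint, and restricts
on it to a unitary dilation `U` of `T`. -/
theorem unitary_dilations_of_prod_unitary
    {H : Type*} [NormedAddCommGroup H] [InnerProductSpace ℂ H] [CompleteSpace H]
    {H' : Type*} [NormedAddCommGroup H'] [InnerProductSpace ℂ H'] [CompleteSpace H']
    {E : Type*} [NormedAddCommGroup E] [InnerProductSpace ℂ E] [CompleteSpace E]
    (T : H →L[ℂ] H) (hT : ‖T‖ ≤ 1)
    (V : H' →L[ℂ] H') (hV : V ∈ unitary (H' →L[ℂ] H')) :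
    (∀ W : WithLp 2 (WithLp 2 (H × H') × E) →L[ℂ] WithLp 2 (WithLp 2 (H × H') × E),
      IsUnitaryDilation (prodOp T V) W →
        (∀ h' : H', W (mk3 0 h' 0) = mk3 0 (V h') 0) ∧
        (∀ (x : H) (e : E), ∃ (x' : H) (e' : E), W (mk3 x 0 e) = mk3 x' 0 e') ∧
        (∀ (x : H) (e : E), ∃ (x' : H) (e' : E), (star W) (mk3 x 0 e) = mk3 x' 0 e') ∧
        (∃ U : WithLp 2 (H × E) →L[ℂ] WithLp 2 (H × E),
          IsUnitaryDilation T U ∧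
          ∀ (x : H) (e : E),
            let u := WithLp.equiv 2 (H × E) (U ((WithLp.equiv 2 (H × E)).symm (x, e)))
            W (mk3 x 0 e) = mk3 u.1 0 u.2)) ∧
    (∀ U : WithLp 2 (H × E) →L[ℂ] WithLp 2 (H × E),
      IsUnitaryDilation T U →
        ∃ W : WithLp 2 (WithLp 2 (H × H') × E) →L[ℂ] WithLp 2 (WithLp 2 (H × H') × E),
          IsUnitaryDilation (prodOp T V) W ∧
          ∀ (x : H) (h' : H') (e : E),
            let u := WithLp.equiv 2 (H × E) (U ((WithLp.equiv 2 (H × E)).symm (x, e)))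
            W (mk3 x h' e) = mk3 u.1 (V h') u.2) :=
  unitary_dilations_of_prod_unitary_general T V hV
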